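/- Let K be a compact Hausdorff space and I a closed ideal of C(K,ℂ). Define F = ⋂_{f ∈ I} f⁻¹(0). Then F is closed and I = {f ∈ C(K,ℂ) : f vanishes on F}. -/

import Mathlib

/-! The common zero set `F` of `I` is the complement of the open set `ContinuousMap.setOfIdeal I`
of points where some member of `I` is nonzero. Conversely, a function vanishing on `F` is a uniform
limit of elements of `I` (a partition-of-unity / Urysohn argument, in Mathlib as
`ContinuousMap.idealOfSet_ofIdeal_eq_closure`), so it lies in `I` when `I` is closed. -/

namespace ContinuousMap

variable {X R : Type*} [TopologicalSpace X] [Semiring R] [TopologicalSpace R]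
  [IsTopologicalSemiring R]

theorem iInter_zeroSet_eq_compl_setOfIdeal (I : Ideal C(X, R)) :
    ⋂ f ∈ I, (f : C(X, R)) ⁻¹' {0} = (setOfIdeal I)ᶜ := by
  ext x
  simp [setOfIdeal]

theorem isClosed_iInter_zeroSet [T2Space R] (I : Ideal C(X, R)) :
    IsClosed (⋂ f ∈ I, (f : C(X, R)) ⁻¹' {0}) := by
  rw [iInter_zeroSet_eq_compl_setOfIdeal]
  exact (setOfIdeal_open I).isClosed_compl

end ContinuousMap

/-- For a closed ideal `I` of `C(K,ℂ)` on a compact Hausdorff space, with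
`F = ⋂_{f ∈ I} f⁻¹(0)`, the set `F` is closed and `I` is exactly the set of functions
vanishing on `F`. -/
theorem stmt_5 {K : Type*} [TopologicalSpace K] [CompactSpace K] [T2Space K]
    (I : Ideal C(K, ℂ)) (hI : IsClosed (I : Set C(K, ℂ)))
    (F : Set K) (hF : F = ⋂ f ∈ I, (f : C(K, ℂ)) ⁻¹' {0}) :
    IsClosed F ∧ (I : Set C(K, ℂ)) = {f : C(K, ℂ) | ∀ x ∈ F, f x = 0} := by
  subst hF
  refine ⟨ContinuousMap.isClosed_iInter_zeroSet I, ?_⟩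
  conv_lhs => rw [← ContinuousMap.idealOfSet_ofIdeal_isClosed hI]
  ext f
  rw [SetLike.mem_coe, ContinuousMap.mem_idealOfSet,
    ContinuousMap.iInter_zeroSet_eq_compl_setOfIdeal]
  rfl
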